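/- Let P₁ ∈ C^{n₁×n₂} be [Δ₁]-stable on Δ₂ and P₂ ∈ C^{n₂×n₃} be [Δ₂]-stable on Δ₃. Then the grouped matrix of the product equals the product of the grouped matrices: (P₁P₂)^{-+} = P₁^{-+} P₂^{-+}. -/

import Mathlib

/-- `P` is `[Δ]`-stable on `Sg`. -/
def IsStableOn {m n : ℕ} (P : Matrix (Fin m) (Fin n) ℂ)
    (Δ : Finpartition (Finset.univ : Finset (Fin m)))
    (Sg : Finpartition (Finset.univ : Finset (Fin n))) : Prop :=
  ∀ K ∈ Δ.parts, ∀ L ∈ Sg.parts, ∀ i ∈ K, ∀ i' ∈ K,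
    ∑ j ∈ L, P i j = ∑ j ∈ L, P i' j

/-- `a` is the grouped matrix of `P` (with respect to Δ, Sg): `a K L` is the common
row sum of the submatrix `P_K^L`. -/
def IsGrouped {m n : ℕ} (P : Matrix (Fin m) (Fin n) ℂ)
    (Δ : Finpartition (Finset.univ : Finset (Fin m)))
    (Sg : Finpartition (Finset.univ : Finset (Fin n)))
    (a : Finset (Fin m) → Finset (Fin n) → ℂ) : Prop :=
  ∀ K ∈ Δ.parts, ∀ L ∈ Sg.parts, ∀ i ∈ K, ∑ j ∈ L, P i j = a K L

@[to_additive]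
theorem Finpartition.prod_prod_parts {α M : Type*} [DecidableEq α] [CommMonoid M]
    {s : Finset α} (P : Finpartition s) (f : α → M) :
    ∏ W ∈ P.parts, ∏ k ∈ W, f k = ∏ k ∈ s, f k := by
  conv_rhs => rw [← P.biUnion_parts]
  exact (Finset.prod_biUnion fun _ hW _ hW' hne => P.disjoint hW hW' hne).symm

theorem Matrix.sum_mul_apply {l m n R : Type*} [Fintype m] [NonUnitalNonAssocSemiring R]
    (A : Matrix l m R) (B : Matrix m n R) (i : l) (L : Finset n) :
    ∑ j ∈ L, (A * B) i j = ∑ k, A i k * ∑ j ∈ L, B k j := by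
  simp only [Matrix.mul_apply, Finset.mul_sum]
  exact Finset.sum_comm

theorem grouped_mul_general {n₁ n₂ n₃ : ℕ}
    (P₁ : Matrix (Fin n₁) (Fin n₂) ℂ) (P₂ : Matrix (Fin n₂) (Fin n₃) ℂ)
    (Δ₁ : Finpartition (Finset.univ : Finset (Fin n₁)))
    (Δ₂ : Finpartition (Finset.univ : Finset (Fin n₂)))
    (Δ₃ : Finpartition (Finset.univ : Finset (Fin n₃)))
    (a₁ : Finset (Fin n₁) → Finset (Fin n₂) → ℂ)
    (a₂ : Finset (Fin n₂) → Finset (Fin n₃) → ℂ)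
    (ha₁ : IsGrouped P₁ Δ₁ Δ₂ a₁) (ha₂ : IsGrouped P₂ Δ₂ Δ₃ a₂) :
    IsGrouped (P₁ * P₂) Δ₁ Δ₃
      (fun K L => ∑ W ∈ Δ₂.parts, a₁ K W * a₂ W L) := by
  intro K hK L hL i hi
  calc ∑ j ∈ L, (P₁ * P₂) i j
      = ∑ W ∈ Δ₂.parts, ∑ k ∈ W, P₁ i k * ∑ j ∈ L, P₂ k j := by
        rw [Matrix.sum_mul_apply, Δ₂.sum_sum_parts]
    _ = ∑ W ∈ Δ₂.parts, ∑ k ∈ W, P₁ i k * a₂ W L := by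
        refine Finset.sum_congr rfl fun W hW => Finset.sum_congr rfl fun k hk => ?_
        rw [ha₂ W hW L hL k hk]
    _ = ∑ W ∈ Δ₂.parts, a₁ K W * a₂ W L := by
        refine Finset.sum_congr rfl fun W hW => ?_
        rw [← Finset.sum_mul, ha₁ K hK W hW i hi]

/-- `(P₁P₂)^{-+} = P₁^{-+} P₂^{-+}`: for every `K ∈ Δ₁`, `L ∈ Δ₃`,
the common row sum of `(P₁P₂)_K^L` equals the `(K,L)` entry of the product of the
grouped matrices, namely `∑_{W ∈ Δ₂} a₁ K W * a₂ W L`. -/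
theorem grouped_mul {n₁ n₂ n₃ : ℕ}
    (P₁ : Matrix (Fin n₁) (Fin n₂) ℂ) (P₂ : Matrix (Fin n₂) (Fin n₃) ℂ)
    (Δ₁ : Finpartition (Finset.univ : Finset (Fin n₁)))
    (Δ₂ : Finpartition (Finset.univ : Finset (Fin n₂)))
    (Δ₃ : Finpartition (Finset.univ : Finset (Fin n₃)))
    (h₁ : IsStableOn P₁ Δ₁ Δ₂) (h₂ : IsStableOn P₂ Δ₂ Δ₃)
    (a₁ : Finset (Fin n₁) → Finset (Fin n₂) → ℂ)
    (a₂ : Finset (Fin n₂) → Finset (Fin n₃) → ℂ)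
    (ha₁ : IsGrouped P₁ Δ₁ Δ₂ a₁) (ha₂ : IsGrouped P₂ Δ₂ Δ₃ a₂) :
    IsGrouped (P₁ * P₂) Δ₁ Δ₃
      (fun K L => ∑ W ∈ Δ₂.parts, a₁ K W * a₂ W L) :=
  grouped_mul_general P₁ P₂ Δ₁ Δ₂ Δ₃ a₁ a₂ ha₁ ha₂
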